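/- Suppose D and A are lower unitriangular matrices (with respect to a partial order ⊴ on the index set, i.e. D_{λμ} = 0 unless λ ⊴ μ and D_{λλ} = 1) with Laurent polynomial entries over ℚ satisfying D(q) = A(q) · D(q^{-1}). If additionally A_{λτ}(1) = δ_{λτ}, then differentiating at q = 1 gives D'_{λμ}(1) = (1/2) Σ_{λ ⊴ τ ⊴ μ} A'_{λτ}(1) D_{τμ}(1). -/

import Mathlib

/-- `f : ℝ → ℝ` is (the evaluation of) a Laurent polynomial with rational
coefficients. -/
def IsLaurentQ (f : ℝ → ℝ) : Prop :=
  ∃ (p : Polynomial ℚ) (n : ℕ), ∀ q : ℝ, q ≠ 0 → f q = Polynomial.aeval q p / q ^ n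

open Filter Topology

theorem IsLaurentQ.differentiableAt {f : ℝ → ℝ} (hf : IsLaurentQ f) {x : ℝ} (hx : x ≠ 0) :
    DifferentiableAt ℝ f x := by
  obtain ⟨p, n, hp⟩ := hf
  have hf_eq : f =ᶠ[𝓝 x] fun q => Polynomial.aeval q p / q ^ n := by
    filter_upwards [eventually_ne_nhds hx] with q hq using hp q hq
  have hquot : DifferentiableAt ℝ (fun q => Polynomial.aeval q p / q ^ n) x :=
    p.differentiableAt_aeval.div (differentiableAt_pow n) (pow_ne_zero n hx)
  exact hquot.congr_of_eventuallyEq hf_eq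

theorem HasDerivAt.comp_inv_one {f : ℝ → ℝ} {f' : ℝ} (hf : HasDerivAt f f' 1) :
    HasDerivAt (fun q => f q⁻¹) (-f') 1 := by
  have hinv : HasDerivAt (fun q : ℝ => q⁻¹) (-1) 1 := by
    simpa using hasDerivAt_inv (one_ne_zero (α := ℝ))
  have hf' : HasDerivAt f f' (1 : ℝ)⁻¹ := by rwa [inv_one]
  simpa [Function.comp_def] using hf'.comp 1 hinv

/-- The inversion `q ↦ q⁻¹` flips the sign of every `(g t)'(1)`, and `a t 1 = δ_{ti}` leaves only
`-(g i)'(1)` of those terms, which moves to the left-hand side. -/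
theorem two_mul_deriv_eq_sum_of_eventuallyEq_sum_mul_comp_inv {ι : Type*} [Fintype ι]
    {a g : ι → ℝ → ℝ} {i : ι}
    (ha : ∀ t, DifferentiableAt ℝ (a t) 1) (hg : ∀ t, DifferentiableAt ℝ (g t) 1)
    (heq : g i =ᶠ[𝓝 1] fun q => ∑ t, a t q * g t q⁻¹)
    (hai : a i 1 = 1) (ha_ne : ∀ t, t ≠ i → a t 1 = 0) :
    2 * deriv (g i) 1 = ∑ t, deriv (a t) 1 * g t 1 := by
  have hsum : HasDerivAt (fun q => ∑ t, a t q * g t q⁻¹)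
      (∑ t, (deriv (a t) 1 * g t 1 + a t 1 * -deriv (g t) 1)) 1 := by
    refine HasDerivAt.fun_sum fun t _ => ?_
    simpa using (ha t).hasDerivAt.fun_mul (hg t).hasDerivAt.comp_inv_one
  have hdelta : ∑ t, a t 1 * -deriv (g t) 1 = -deriv (g i) 1 := by
    rw [Finset.sum_eq_single_of_mem i (Finset.mem_univ i) fun t _ ht => by rw [ha_ne t ht, zero_mul],
      hai, one_mul]
  have hderiv := heq.deriv_eq.trans hsum.deriv
  rw [Finset.sum_add_distrib, hdelta] at hderiv
  linarith

theorem stmt12_general {ι : Type*} [Fintype ι] [PartialOrder ι]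
    [DecidableRel (α := ι) (· ≤ ·)]
    (d a : ι → ι → ℝ → ℝ)
    (hdL : ∀ lam mu, IsLaurentQ (d lam mu)) (haL : ∀ lam mu, IsLaurentQ (a lam mu))
    (hdtri : ∀ lam mu, ¬ lam ≤ mu → ∀ q, d lam mu q = 0)
    (hatri : ∀ lam mu, ¬ lam ≤ mu → ∀ q, a lam mu q = 0)
    (hadiag : ∀ lam q, a lam lam q = 1)
    (heq : ∀ lam mu (q : ℝ), q ≠ 0 →
      d lam mu q = ∑ tau : ι, a lam tau q * d tau mu q⁻¹)
    (ha1 : ∀ lam tau, lam ≠ tau → a lam tau 1 = 0) :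
    ∀ lam mu : ι,
      deriv (d lam mu) 1 =
        (1 / 2) * ∑ tau ∈ Finset.univ.filter (fun tau => lam ≤ tau ∧ tau ≤ mu),
          deriv (a lam tau) 1 * d tau mu 1 := by
  intro lam mu
  have key := two_mul_deriv_eq_sum_of_eventuallyEq_sum_mul_comp_inv (g := fun t => d t mu)
    (fun t => (haL lam t).differentiableAt one_ne_zero)
    (fun t => (hdL t mu).differentiableAt one_ne_zero)
    (by filter_upwards [eventually_ne_nhds one_ne_zero] with q hq using heq lam mu q hq)
    (hadiag lam 1) (fun t ht => ha1 lam t (Ne.symm ht))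
  have hsupp : ∀ t, ¬ (lam ≤ t ∧ t ≤ mu) → deriv (a lam t) 1 * d t mu 1 = 0 := by
    intro t ht
    rcases not_and_or.mp ht with hlam | hmu
    · rw [show a lam t = fun _ => 0 from funext (hatri lam t hlam), deriv_const, zero_mul]
    · rw [hdtri t mu hmu 1, mul_zero]
  rw [Finset.sum_filter_of_ne fun t _ h => not_not.mp (mt (hsupp t) h)]
  linarith

/-- Let `D` and `A` be lower unitriangular matrices (w.r.t. a
partial order `⊴` on a finite index set) with Laurent polynomial entries over
`ℚ`, satisfying `D(q) = A(q) · D(q⁻¹)`.  If moreover `A_{λτ}(1) = δ_{λτ}`, then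
differentiating at `q = 1` gives
`D'_{λμ}(1) = (1/2) Σ_{λ ⊴ τ ⊴ μ} A'_{λτ}(1) D_{τμ}(1)`. -/
theorem stmt12 {ι : Type*} [Fintype ι] [DecidableEq ι] [PartialOrder ι]
    [DecidableRel (α := ι) (· ≤ ·)]
    (d a : ι → ι → ℝ → ℝ)
    (hdL : ∀ lam mu, IsLaurentQ (d lam mu)) (haL : ∀ lam mu, IsLaurentQ (a lam mu))
    (hdtri : ∀ lam mu, ¬ lam ≤ mu → ∀ q, d lam mu q = 0)
    (hatri : ∀ lam mu, ¬ lam ≤ mu → ∀ q, a lam mu q = 0)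
    (hddiag : ∀ lam q, d lam lam q = 1) (hadiag : ∀ lam q, a lam lam q = 1)
    (heq : ∀ lam mu (q : ℝ), q ≠ 0 →
      d lam mu q = ∑ tau : ι, a lam tau q * d tau mu q⁻¹)
    (ha1 : ∀ lam tau, lam ≠ tau → a lam tau 1 = 0) :
    ∀ lam mu : ι,
      deriv (d lam mu) 1 =
        (1 / 2) * ∑ tau ∈ Finset.univ.filter (fun tau => lam ≤ tau ∧ tau ≤ mu),
          deriv (a lam tau) 1 * d tau mu 1 :=
  stmt12_general d a hdL haL hdtri hatri hadiag heq ha1
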